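/- One-dimensionality of the deficiency space on a bounded interval for |α| ≥ 1/2 (core of Proposition 3.4(i)): Let α ∈ ℝ with |α| ≥ 1/2 and let b ∈ (0,∞). Consider the set S of continuously differentiable functions f = (f₁,f₂) : (0,b) → ℂ² with ∫₀^b |f(x)|²_{ℂ²} dx < ∞ satisfying f₂'(x) + (α/x) f₂(x) = i f₁(x) and −f₁'(x) + (α/x) f₁(x) = i f₂(x) for all x ∈ (0,b). Then S is a one-dimensional complex vector space: S contains a nonzero element, and any two elements of S are linearly dependent over ℂ. -/

import Mathlib

open MeasureTheory Real Set

noncomputable section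

/-- Membership in the deficiency space `S = ker(T_α − i)` of the maximal operator associated
with `τ_α` on `L²((0,b); ℂ²)`: `f = (f₁,f₂)` is continuously differentiable on `(0,b)`,
square-integrable on `(0,b)`, and solves `τ_α f = i f` there. -/
def MemDeficiency (α b : ℝ) (f₁ f₂ : ℝ → ℂ) : Prop :=
  ContDiffOn ℝ 1 f₁ (Ioo 0 b) ∧ ContDiffOn ℝ 1 f₂ (Ioo 0 b)
    ∧ IntegrableOn (fun x => ‖f₁ x‖ ^ 2 + ‖f₂ x‖ ^ 2) (Ioo 0 b)
    ∧ ∀ x ∈ Ioo (0 : ℝ) b,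
        deriv f₂ x + ((α / x : ℝ) : ℂ) * f₂ x = Complex.I * f₁ x
        ∧ -deriv f₁ x + ((α / x : ℝ) : ℂ) * f₁ x = Complex.I * f₂ x

/-!
For `α ≥ 1/2` the system has an explicit solution `F = (x^α G(x²), i x^(α+1) H(x²))` with entire
power series `G`, `H`, and `‖F x‖² = O(x^(2α)) = O(x)` at `0`. The Wronskian `F₁ f₂ - F₂ f₁` of `F`
with any solution `f` is constant, and by Cauchy–Schwarz its square is at most `C x ‖f x‖²`; if it
were a nonzero constant, `1/x` would be integrable near `0`. So it vanishes, and since `F₁` has no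
zeros, `(f₁ / F₁)' = -i W / F₁² = 0` makes `f` a constant multiple of `F`. The case `α ≤ -1/2`
reduces to `-α` through the symmetry `(f₁, f₂) ↦ (f̄₂, f̄₁)` of the system.
-/

open scoped Nat

section FactorialBoundedSeries

variable {c : ℕ → ℝ}

theorem norm_mul_pow_le_of_abs_le_inv_factorial (hc : ∀ n, |c n| ≤ 1 / n !) (n : ℕ) (t : ℝ) :
    ‖c n * t ^ n‖ ≤ |t| ^ n / n ! := by
  rw [norm_mul, norm_pow, norm_eq_abs, norm_eq_abs, div_eq_mul_one_div, mul_comm]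
  gcongr
  exact hc n

theorem summable_mul_pow_of_abs_le_inv_factorial (hc : ∀ n, |c n| ≤ 1 / n !) (t : ℝ) :
    Summable fun n => c n * t ^ n :=
  .of_norm_bounded (Real.summable_pow_div_factorial |t|)
    (norm_mul_pow_le_of_abs_le_inv_factorial hc · t)

theorem abs_tsum_mul_pow_le_exp (hc : ∀ n, |c n| ≤ 1 / n !) (t : ℝ) :
    |∑' n, c n * t ^ n| ≤ exp |t| := by
  rw [Real.exp_eq_exp_ℝ, ← (NormedSpace.expSeries_div_hasSum_exp |t|).tsum_eq]
  refine (norm_tsum_le_tsum_norm (summable_mul_pow_of_abs_le_inv_factorial hc t).norm).trans ?_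
  exact Summable.tsum_le_tsum (norm_mul_pow_le_of_abs_le_inv_factorial hc · t)
    (summable_mul_pow_of_abs_le_inv_factorial hc t).norm (Real.summable_pow_div_factorial |t|)

theorem norm_mul_nat_mul_pow_sub_one_le (hc : ∀ n, |c n| ≤ 1 / n !) {R : ℝ} (hR : 1 ≤ R)
    (n : ℕ) {y : ℝ} (hy : |y| ≤ R) : ‖c n * (n * y ^ (n - 1))‖ ≤ (2 * R) ^ n / n ! := by
  have hn : (n : ℝ) ≤ 2 ^ n := by exact_mod_cast Nat.lt_two_pow_self.le
  have hy' : |y| ^ (n - 1) ≤ R ^ n :=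
    (pow_le_pow_left₀ (abs_nonneg y) hy _).trans (pow_le_pow_right₀ hR (Nat.sub_le n 1))
  calc ‖c n * (n * y ^ (n - 1))‖ = |c n| * (n * |y| ^ (n - 1)) := by simp
    _ ≤ 1 / n ! * (2 ^ n * R ^ n) := by gcongr; exact hc n
    _ = (2 * R) ^ n / n ! := by rw [mul_pow]; ring

theorem summable_mul_nat_mul_pow_sub_one_of_abs_le_inv_factorial (hc : ∀ n, |c n| ≤ 1 / n !)
    (t : ℝ) : Summable fun n => c n * (n * t ^ (n - 1)) :=
  .of_norm_bounded (Real.summable_pow_div_factorial (2 * (|t| + 1)))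
    fun n => norm_mul_nat_mul_pow_sub_one_le hc (by simp) n (by simp)

theorem hasDerivAt_tsum_mul_pow_of_abs_le_inv_factorial (hc : ∀ n, |c n| ≤ 1 / n !) (t : ℝ) :
    HasDerivAt (fun y => ∑' n, c n * y ^ n) (∑' n, c n * (n * t ^ (n - 1))) t := by
  have ht : t ∈ Metric.ball (0 : ℝ) (|t| + 1) := by simp
  exact hasDerivAt_tsum_of_isPreconnected (Real.summable_pow_div_factorial (2 * (|t| + 1)))
    Metric.isOpen_ball (convex_ball 0 _).isPreconnected
    (fun n y _ => (hasDerivAt_pow n y).const_mul (c n))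
    (fun n y hy => norm_mul_nat_mul_pow_sub_one_le hc (by simp) n
      (by rw [mem_ball_zero_iff, norm_eq_abs] at hy; exact hy.le))
    ht (summable_mul_pow_of_abs_le_inv_factorial hc t) ht

end FactorialBoundedSeries

theorem contDiffOn_one_of_hasDerivAt {𝕜 F : Type*} [NontriviallyNormedField 𝕜]
    [NormedAddCommGroup F] [NormedSpace 𝕜 F] {f f' : 𝕜 → F} {s : Set 𝕜} (hs : IsOpen s)
    (hf : ∀ x ∈ s, HasDerivAt f (f' x) x) (hf' : ContinuousOn f' s) : ContDiffOn 𝕜 1 f s := by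
  rw [show (1 : WithTop ℕ∞) = 0 + 1 from rfl, contDiffOn_succ_iff_deriv_of_isOpen hs,
    contDiffOn_zero]
  exact ⟨fun x hx => (hf x hx).differentiableAt.differentiableWithinAt, by simp,
    hf'.congr fun x hx => (hf x hx).deriv⟩

theorem nonpos_of_le_mul_of_integrableOn {S : ℝ → ℝ} {c b : ℝ} (hb : 0 < b)
    (hS : IntegrableOn S (Ioo 0 b)) (h : ∀ x ∈ Ioo (0 : ℝ) b, c ≤ x * S x) : c ≤ 0 := by
  by_contra! hc
  -- otherwise `x⁻¹ ≤ S x / c` near `0`, and `x⁻¹` is not integrable there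
  have hinv : IntegrableOn (fun x : ℝ => x ^ (-1 : ℝ)) (Ioo 0 b) := by
    refine (hS.div_const c).mono' ((continuousOn_id.rpow_const fun x hx =>
      Or.inl hx.1.ne').aestronglyMeasurable measurableSet_Ioo) ?_
    refine (ae_restrict_iff' measurableSet_Ioo).2 (.of_forall fun x hx => ?_)
    rw [norm_eq_abs, abs_of_pos (rpow_pos_of_pos hx.1 _), rpow_neg_one,
      inv_le_iff_one_le_mul₀' hx.1, ← mul_div_assoc, le_div_iff₀ hc, one_mul]
    exact h x hx
  norm_num [intervalIntegral.integrableOn_Ioo_rpow_iff hb] at hinv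

theorem norm_mul_sub_mul_sq_le {R : Type*} [SeminormedRing R] (a b c d : R) :
    ‖a * d - b * c‖ ^ 2 ≤ (‖a‖ ^ 2 + ‖b‖ ^ 2) * (‖c‖ ^ 2 + ‖d‖ ^ 2) := by
  have h : ‖a * d - b * c‖ ≤ ‖a‖ * ‖d‖ + ‖b‖ * ‖c‖ :=
    (norm_sub_le _ _).trans (add_le_add (norm_mul_le _ _) (norm_mul_le _ _))
  nlinarith [norm_nonneg (a * d - b * c), sq_nonneg (‖a‖ * ‖c‖ - ‖b‖ * ‖d‖)]

def coeffG (α : ℝ) : ℕ → ℝ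
  | 0 => 1
  | n + 1 => coeffG α n / ((2 * n + 2) * (2 * α + 2 * n + 1))

def coeffH (α : ℝ) (n : ℕ) : ℝ := coeffG α n / (2 * α + 2 * n + 1)

def seriesG (α t : ℝ) : ℝ := ∑' n, coeffG α n * t ^ n

def seriesH (α t : ℝ) : ℝ := ∑' n, coeffH α n * t ^ n

section BesselSeries

variable {α : ℝ}

theorem coeffG_nonneg (hα : 0 ≤ α) (n : ℕ) : 0 ≤ coeffG α n := by
  induction n with
  | zero => simp [coeffG]
  | succ n ih => rw [coeffG]; positivity

theorem abs_coeffG_le (hα : 0 ≤ α) (n : ℕ) : |coeffG α n| ≤ 1 / n ! := by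
  rw [abs_of_nonneg (coeffG_nonneg hα n)]
  induction n with
  | zero => simp [coeffG]
  | succ n ih =>
    calc coeffG α (n + 1) ≤ 1 / n ! / (n + 1) :=
          div_le_div₀ (by positivity) ih (by positivity) (by nlinarith)
      _ = 1 / (n + 1)! := by rw [Nat.factorial_succ]; push_cast; field_simp

theorem abs_coeffH_le (hα : 0 ≤ α) (n : ℕ) : |coeffH α n| ≤ 1 / n ! := by
  refine le_trans ?_ (abs_coeffG_le hα n)
  rw [coeffH, abs_div]
  exact div_le_self (abs_nonneg _) (by rw [abs_of_pos (by positivity)]; linarith)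

theorem hasDerivAt_seriesG (hα : 0 ≤ α) (t : ℝ) :
    HasDerivAt (seriesG α) (seriesH α t / 2) t := by
  refine (hasDerivAt_tsum_mul_pow_of_abs_le_inv_factorial (abs_coeffG_le hα) t).congr_deriv ?_
  -- the recursion for `coeffG` is exactly `G' = H / 2`
  have hsum := summable_mul_nat_mul_pow_sub_one_of_abs_le_inv_factorial (abs_coeffG_le hα) t
  rw [hsum.tsum_eq_zero_add, seriesH, ← tsum_div_const]
  simp only [CharP.cast_eq_zero, zero_mul, mul_zero, zero_add, Nat.cast_succ, Nat.add_sub_cancel]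
  refine tsum_congr fun n => ?_
  rw [coeffG, coeffH]
  field_simp

theorem exists_hasDerivAt_seriesH (hα : 0 ≤ α) (t : ℝ) :
    ∃ H', HasDerivAt (seriesH α) H' t ∧ (2 * α + 1) * seriesH α t + 2 * t * H' = seriesG α t := by
  refine ⟨_, hasDerivAt_tsum_mul_pow_of_abs_le_inv_factorial (abs_coeffH_le hα) t, ?_⟩
  have hH := summable_mul_pow_of_abs_le_inv_factorial (abs_coeffH_le hα) t
  rw [seriesH, seriesG, ← tsum_mul_left, ← tsum_mul_left, ← Summable.tsum_add]
  · refine tsum_congr fun n => ?_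
    rcases n with _ | n
    · simp [coeffH, coeffG]
      field_simp
    · simp only [coeffH, pow_succ]
      field_simp
      push_cast
      ring
  · exact hH.mul_left _
  · exact (summable_mul_nat_mul_pow_sub_one_of_abs_le_inv_factorial (abs_coeffH_le hα) t).mul_left _

theorem one_le_seriesG (hα : 0 ≤ α) {t : ℝ} (ht : 0 ≤ t) : 1 ≤ seriesG α t := by
  rw [seriesG]
  simpa [coeffG] using (summable_mul_pow_of_abs_le_inv_factorial (abs_coeffG_le hα) t).le_tsum 0
    fun n _ => mul_nonneg (coeffG_nonneg hα n) (pow_nonneg ht n)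

end BesselSeries

section Deficiency

variable {α b : ℝ} {f₁ f₂ g₁ g₂ P₁ P₂ : ℝ → ℂ}

theorem memDeficiency_iff : MemDeficiency α b f₁ f₂ ↔
    IntegrableOn (fun x => ‖f₁ x‖ ^ 2 + ‖f₂ x‖ ^ 2) (Ioo 0 b) ∧ ∀ x ∈ Ioo (0 : ℝ) b,
      HasDerivAt f₁ (((α / x : ℝ) : ℂ) * f₁ x - Complex.I * f₂ x) x ∧
      HasDerivAt f₂ (Complex.I * f₁ x - ((α / x : ℝ) : ℂ) * f₂ x) x := by
  constructor
  · rintro ⟨hf₁, hf₂, hint, hode⟩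
    refine ⟨hint, fun x hx => ?_⟩
    have hd : ∀ {f : ℝ → ℂ}, ContDiffOn ℝ 1 f (Ioo 0 b) → HasDerivAt f (deriv f x) x :=
      fun hf => ((hf.contDiffAt (Ioo_mem_nhds hx.1 hx.2)).differentiableAt one_ne_zero).hasDerivAt
    obtain ⟨h₂, h₁⟩ := hode x hx
    exact ⟨(hd hf₁).congr_deriv (by linear_combination -h₁),
      (hd hf₂).congr_deriv (by linear_combination h₂)⟩
  · rintro ⟨hint, hode⟩
    have hf₁ : ContinuousOn f₁ (Ioo 0 b) := fun x hx =>
      (hode x hx).1.continuousAt.continuousWithinAt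
    have hf₂ : ContinuousOn f₂ (Ioo 0 b) := fun x hx =>
      (hode x hx).2.continuousAt.continuousWithinAt
    have hcoef : ContinuousOn (fun x : ℝ => ((α / x : ℝ) : ℂ)) (Ioo 0 b) :=
      Complex.continuous_ofReal.comp_continuousOn
        (continuousOn_const.div continuousOn_id fun x hx => hx.1.ne')
    refine ⟨contDiffOn_one_of_hasDerivAt isOpen_Ioo (fun x hx => (hode x hx).1)
        ((hcoef.mul hf₁).sub (continuousOn_const.mul hf₂)),
      contDiffOn_one_of_hasDerivAt isOpen_Ioo (fun x hx => (hode x hx).2)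
        ((continuousOn_const.mul hf₁).sub (hcoef.mul hf₂)),
      hint, fun x hx => ⟨?_, ?_⟩⟩
    · rw [(hode x hx).2.deriv]; ring
    · rw [(hode x hx).1.deriv]; ring

theorem MemDeficiency.exists_wronskian_eq (hf : MemDeficiency α b f₁ f₂)
    (hg : MemDeficiency α b g₁ g₂) :
    ∃ w : ℂ, ∀ x ∈ Ioo (0 : ℝ) b, f₁ x * g₂ x - f₂ x * g₁ x = w := by
  have hderiv : ∀ x ∈ Ioo (0 : ℝ) b, HasDerivAt (fun y => f₁ y * g₂ y - f₂ y * g₁ y) 0 x := by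
    intro x hx
    obtain ⟨hf₁, hf₂⟩ := (memDeficiency_iff.1 hf).2 x hx
    obtain ⟨hg₁, hg₂⟩ := (memDeficiency_iff.1 hg).2 x hx
    exact ((hf₁.mul hg₂).sub (hf₂.mul hg₁)).congr_deriv (by ring)
  exact isOpen_Ioo.exists_is_const_of_deriv_eq_zero isPreconnected_Ioo
    (fun x hx => (hderiv x hx).differentiableAt.differentiableWithinAt)
    fun x hx => (hderiv x hx).deriv

theorem MemDeficiency.exists_eq_mul_of_wronskian_eq_zero (hP : MemDeficiency α b P₁ P₂)
    (hf : MemDeficiency α b f₁ f₂) (hP₁ : ∀ x ∈ Ioo (0 : ℝ) b, P₁ x ≠ 0)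
    (hW : ∀ x ∈ Ioo (0 : ℝ) b, P₁ x * f₂ x - P₂ x * f₁ x = 0) :
    ∃ μ : ℂ, ∀ x ∈ Ioo (0 : ℝ) b, f₁ x = μ * P₁ x ∧ f₂ x = μ * P₂ x := by
  have hderiv : ∀ x ∈ Ioo (0 : ℝ) b, HasDerivAt (fun y => f₁ y / P₁ y) 0 x := by
    intro x hx
    have hPx := hP₁ x hx
    refine (((memDeficiency_iff.1 hf).2 x hx).1.div ((memDeficiency_iff.1 hP).2 x hx).1
      hPx).congr_deriv ?_
    rw [div_eq_zero_iff]
    exact Or.inl (by linear_combination -Complex.I * hW x hx)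
  obtain ⟨μ, hμ⟩ := isOpen_Ioo.exists_is_const_of_deriv_eq_zero isPreconnected_Ioo
    (fun x hx => (hderiv x hx).differentiableAt.differentiableWithinAt)
    fun x hx => (hderiv x hx).deriv
  refine ⟨μ, fun x hx => ?_⟩
  have hPx := hP₁ x hx
  have h₁ : f₁ x = μ * P₁ x := by rw [← hμ x hx]; field_simp
  refine ⟨h₁, mul_left_cancel₀ hPx ?_⟩
  linear_combination hW x hx + P₂ x * h₁

theorem MemDeficiency.wronskian_eq_zero_of_normSq_le (hP : MemDeficiency α b P₁ P₂) {C : ℝ}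
    (hC : ∀ x ∈ Ioo (0 : ℝ) b, ‖P₁ x‖ ^ 2 + ‖P₂ x‖ ^ 2 ≤ C * x) (hf : MemDeficiency α b f₁ f₂) :
    ∀ x ∈ Ioo (0 : ℝ) b, P₁ x * f₂ x - P₂ x * f₁ x = 0 := by
  obtain ⟨w, hw⟩ := hP.exists_wronskian_eq hf
  intro x hx
  rw [hw x hx, ← norm_eq_zero, ← sq_eq_zero_iff]
  refine le_antisymm (nonpos_of_le_mul_of_integrableOn (hx.1.trans hx.2) (hf.2.2.1.const_mul C)
    fun y hy => ?_) (sq_nonneg _)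
  calc ‖w‖ ^ 2 = ‖P₁ y * f₂ y - P₂ y * f₁ y‖ ^ 2 := by rw [hw y hy]
    _ ≤ (‖P₁ y‖ ^ 2 + ‖P₂ y‖ ^ 2) * (‖f₁ y‖ ^ 2 + ‖f₂ y‖ ^ 2) := norm_mul_sub_mul_sq_le _ _ _ _
    _ ≤ C * y * (‖f₁ y‖ ^ 2 + ‖f₂ y‖ ^ 2) := by gcongr; exact hC y hy
    _ = y * (C * (‖f₁ y‖ ^ 2 + ‖f₂ y‖ ^ 2)) := by ring

theorem MemDeficiency.star_swap (hf : MemDeficiency α b f₁ f₂) :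
    MemDeficiency (-α) b (star f₂) (star f₁) := by
  obtain ⟨hint, hode⟩ := memDeficiency_iff.1 hf
  refine memDeficiency_iff.2 ⟨?_, fun x hx => ?_⟩
  · simpa [add_comm] using hint
  · obtain ⟨h₁, h₂⟩ := hode x hx
    refine ⟨h₂.star.congr_deriv ?_, h₁.star.congr_deriv ?_⟩ <;>
    · simp [neg_div]
      ring

end Deficiency

-- `2^ν Γ(ν + 1)` times the Bessel solution `(√x I_ν(x), i √x I_{ν+1}(x))`, `ν = α - 1/2`
def regularSolution₁ (α x : ℝ) : ℂ := ((x ^ α * seriesG α (x ^ 2) : ℝ) : ℂ)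

def regularSolution₂ (α x : ℝ) : ℂ := Complex.I * ((x ^ (α + 1) * seriesH α (x ^ 2) : ℝ) : ℂ)

section RegularSolution

variable {α x : ℝ}

theorem hasDerivAt_rpow_mul_seriesG (hα : 0 ≤ α) (hx : 0 < x) :
    HasDerivAt (fun y => y ^ α * seriesG α (y ^ 2))
      (α / x * (x ^ α * seriesG α (x ^ 2)) + x ^ (α + 1) * seriesH α (x ^ 2)) x := by
  have h := (hasDerivAt_rpow_const (p := α) (Or.inl hx.ne')).mul
    ((hasDerivAt_seriesG hα (x ^ 2)).comp x (hasDerivAt_pow 2 x))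
  refine h.congr_deriv ?_
  rw [Function.comp_apply, rpow_sub_one hx.ne', rpow_add_one hx.ne']
  field_simp
  ring

theorem hasDerivAt_rpow_mul_seriesH (hα : 0 ≤ α) (hx : 0 < x) :
    HasDerivAt (fun y => y ^ (α + 1) * seriesH α (y ^ 2))
      (x ^ α * seriesG α (x ^ 2) - α / x * (x ^ (α + 1) * seriesH α (x ^ 2))) x := by
  obtain ⟨H', hH', hODE⟩ := exists_hasDerivAt_seriesH hα (x ^ 2)
  have h := (hasDerivAt_rpow_const (p := α + 1) (Or.inl hx.ne')).mul
    (hH'.comp (h := fun y => y ^ 2) x (hasDerivAt_pow 2 x))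
  refine h.congr_deriv ?_
  rw [Function.comp_apply, ← hODE, add_sub_cancel_right, rpow_add_one hx.ne']
  field_simp
  ring

theorem normSq_regularSolution_le (hα : 0 ≤ α) {b : ℝ} (hx : x ∈ Ioo 0 b) :
    ‖regularSolution₁ α x‖ ^ 2 + ‖regularSolution₂ α x‖ ^ 2 ≤
      (1 + b ^ 2) * exp (b ^ 2) ^ 2 * x ^ (2 * α) := by
  have hexp : exp |x ^ 2| ≤ exp (b ^ 2) := by
    rw [abs_of_nonneg (sq_nonneg x)]
    exact exp_le_exp.2 (pow_le_pow_left₀ hx.1.le hx.2.le 2)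
  have hG := (abs_tsum_mul_pow_le_exp (abs_coeffG_le hα) (x ^ 2)).trans hexp
  have hH := (abs_tsum_mul_pow_le_exp (abs_coeffH_le hα) (x ^ 2)).trans hexp
  have hxα := rpow_pos_of_pos hx.1 α
  have h₁ : ‖regularSolution₁ α x‖ = x ^ α * |seriesG α (x ^ 2)| := by
    simp [regularSolution₁, abs_of_pos hxα]
  have h₂ : ‖regularSolution₂ α x‖ = x ^ α * (x * |seriesH α (x ^ 2)|) := by
    simp [regularSolution₂, rpow_add_one hx.1.ne', abs_of_pos hxα, abs_of_pos hx.1, mul_assoc]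
  calc ‖regularSolution₁ α x‖ ^ 2 + ‖regularSolution₂ α x‖ ^ 2
      = (x ^ α) ^ 2 * (|seriesG α (x ^ 2)| ^ 2 + (x * |seriesH α (x ^ 2)|) ^ 2) := by
        rw [h₁, h₂]; ring
    _ ≤ (x ^ α) ^ 2 * (exp (b ^ 2) ^ 2 + (b * exp (b ^ 2)) ^ 2) := by
        have hx₀ := hx.1.le
        gcongr
        exacts [hG, hx₀.trans hx.2.le, hx.2.le, hH]
    _ = (1 + b ^ 2) * exp (b ^ 2) ^ 2 * x ^ (2 * α) := by
        rw [mul_comm 2 α, rpow_mul hx.1.le, rpow_two]; ring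

theorem memDeficiency_regularSolution (hα : 0 ≤ α) {b : ℝ} (hb : 0 < b) :
    MemDeficiency α b (regularSolution₁ α) (regularSolution₂ α) := by
  have hode : ∀ x ∈ Ioo (0 : ℝ) b,
      HasDerivAt (regularSolution₁ α)
        (((α / x : ℝ) : ℂ) * regularSolution₁ α x - Complex.I * regularSolution₂ α x) x ∧
      HasDerivAt (regularSolution₂ α)
        (Complex.I * regularSolution₁ α x - ((α / x : ℝ) : ℂ) * regularSolution₂ α x) x := by
    intro x hx
    refine ⟨(hasDerivAt_rpow_mul_seriesG hα hx.1).ofReal_comp.congr_deriv ?_,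
      ((hasDerivAt_rpow_mul_seriesH hα hx.1).ofReal_comp.const_mul Complex.I).congr_deriv ?_⟩
    · simp only [regularSolution₁, regularSolution₂]
      push_cast
      linear_combination ((x ^ (α + 1) : ℝ) : ℂ) * (seriesH α (x ^ 2) : ℂ) * Complex.I_sq
    · simp only [regularSolution₁, regularSolution₂]
      push_cast
      ring
  refine memDeficiency_iff.2 ⟨?_, hode⟩
  have hcont : ∀ {f : ℝ → ℂ}, (∀ x ∈ Ioo (0 : ℝ) b, DifferentiableAt ℝ f x) →
      ContinuousOn (fun x => ‖f x‖ ^ 2) (Ioo 0 b) := fun hf x hx =>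
    ((hf x hx).continuousAt.norm.pow 2).continuousWithinAt
  refine (((intervalIntegral.integrableOn_Ioo_rpow_iff hb).2 (by linarith : -1 < 2 * α)).const_mul
    ((1 + b ^ 2) * exp (b ^ 2) ^ 2)).mono' (((hcont fun x hx => (hode x hx).1.differentiableAt).add
    (hcont fun x hx => (hode x hx).2.differentiableAt)).aestronglyMeasurable measurableSet_Ioo) ?_
  refine (ae_restrict_iff' measurableSet_Ioo).2 (.of_forall fun x hx => ?_)
  rw [norm_of_nonneg (by positivity)]
  exact normSq_regularSolution_le hα hx

theorem regularSolution₁_ne_zero (hα : 0 ≤ α) (hx : 0 < x) : regularSolution₁ α x ≠ 0 := by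
  have := one_le_seriesG hα (sq_nonneg x)
  simp only [regularSolution₁, ne_eq, Complex.ofReal_eq_zero]
  have := rpow_pos_of_pos hx α
  positivity

end RegularSolution

structure SpansDeficiency (α b : ℝ) (P₁ P₂ : ℝ → ℂ) : Prop where
  mem : MemDeficiency α b P₁ P₂
  exists_eq_mul : ∀ f₁ f₂ : ℝ → ℂ, MemDeficiency α b f₁ f₂ →
    ∃ μ : ℂ, ∀ x ∈ Ioo (0 : ℝ) b, f₁ x = μ * P₁ x ∧ f₂ x = μ * P₂ x

section Spanning

variable {α b : ℝ} {f₁ f₂ g₁ g₂ P₁ P₂ : ℝ → ℂ}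

theorem spansDeficiency_regularSolution (hα : 1 / 2 ≤ α) (hb : 0 < b) :
    SpansDeficiency α b (regularSolution₁ α) (regularSolution₂ α) := by
  have hα₀ : 0 ≤ α := by linarith
  have hF := memDeficiency_regularSolution hα₀ hb
  -- `2 α ≥ 1` makes `‖F x‖²` vanish at least linearly at `0`
  have hC : ∀ x ∈ Ioo (0 : ℝ) b, ‖regularSolution₁ α x‖ ^ 2 + ‖regularSolution₂ α x‖ ^ 2 ≤
      (1 + b ^ 2) * exp (b ^ 2) ^ 2 * b ^ (2 * α - 1) * x := by
    intro x hx
    refine (normSq_regularSolution_le hα₀ hx).trans ?_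
    rw [mul_assoc _ (b ^ _)]
    gcongr
    calc x ^ (2 * α) = x ^ (2 * α - 1) * x := by
          rw [rpow_sub_one hx.1.ne', div_mul_cancel₀ _ hx.1.ne']
      _ ≤ b ^ (2 * α - 1) * x :=
        mul_le_mul_of_nonneg_right (rpow_le_rpow hx.1.le hx.2.le (by linarith)) hx.1.le
  exact ⟨hF, fun f₁ f₂ hf => hF.exists_eq_mul_of_wronskian_eq_zero hf
    (fun x hx => regularSolution₁_ne_zero hα₀ hx.1) (hF.wronskian_eq_zero_of_normSq_le hC hf)⟩

theorem SpansDeficiency.star_swap (h : SpansDeficiency α b P₁ P₂) :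
    SpansDeficiency (-α) b (star P₂) (star P₁) := by
  refine ⟨h.mem.star_swap, fun f₁ f₂ hf => ?_⟩
  obtain ⟨μ, hμ⟩ := h.exists_eq_mul _ _ (by simpa using hf.star_swap)
  refine ⟨star μ, fun x hx => ?_⟩
  obtain ⟨h₁, h₂⟩ := hμ x hx
  exact ⟨by simpa using congrArg star h₂, by simpa using congrArg star h₁⟩

theorem SpansDeficiency.exists_linear_dependence (h : SpansDeficiency α b P₁ P₂)
    (hf : MemDeficiency α b f₁ f₂) (hg : MemDeficiency α b g₁ g₂) :
    ∃ c d : ℂ, ¬(c = 0 ∧ d = 0) ∧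
      ∀ x ∈ Ioo (0 : ℝ) b, c * f₁ x + d * g₁ x = 0 ∧ c * f₂ x + d * g₂ x = 0 := by
  obtain ⟨μ, hμ⟩ := h.exists_eq_mul _ _ hf
  obtain ⟨ν, hν⟩ := h.exists_eq_mul _ _ hg
  by_cases hμ₀ : μ = 0
  · refine ⟨1, 0, by simp, fun x hx => ?_⟩
    simp [(hμ x hx).1, (hμ x hx).2, hμ₀]
  · refine ⟨ν, -μ, fun hcd => hμ₀ (neg_eq_zero.1 hcd.2), fun x hx => ?_⟩
    rw [(hμ x hx).1, (hμ x hx).2, (hν x hx).1, (hν x hx).2]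
    constructor <;> ring

theorem exists_spansDeficiency (hα : 1 / 2 ≤ |α|) (hb : 0 < b) :
    ∃ P₁ P₂ : ℝ → ℂ, SpansDeficiency α b P₁ P₂ ∧ ∃ x ∈ Ioo (0 : ℝ) b, P₁ x ≠ 0 ∨ P₂ x ≠ 0 := by
  have hb₂ : b / 2 ∈ Ioo (0 : ℝ) b := ⟨by linarith, by linarith⟩
  rcases le_or_gt 0 α with hα₀ | hα₀
  · rw [abs_of_nonneg hα₀] at hα
    exact ⟨_, _, spansDeficiency_regularSolution hα hb, b / 2, hb₂,
      .inl (regularSolution₁_ne_zero hα₀ hb₂.1)⟩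
  · rw [abs_of_neg hα₀] at hα
    refine ⟨_, _, by simpa using (spansDeficiency_regularSolution hα hb).star_swap, b / 2, hb₂,
      .inr ?_⟩
    simpa using regularSolution₁_ne_zero (by linarith) hb₂.1

end Spanning

theorem deficiency_one_dimensional_interval (α : ℝ) (hα : 1 / 2 ≤ |α|)
    (b : ℝ) (hb : 0 < b) :
    (∃ f₁ f₂ : ℝ → ℂ, MemDeficiency α b f₁ f₂ ∧ ∃ x ∈ Ioo (0 : ℝ) b, (f₁ x ≠ 0 ∨ f₂ x ≠ 0))
    ∧ ∀ f₁ f₂ g₁ g₂ : ℝ → ℂ, MemDeficiency α b f₁ f₂ → MemDeficiency α b g₁ g₂ →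
        ∃ c d : ℂ, ¬(c = 0 ∧ d = 0) ∧
          ∀ x ∈ Ioo (0 : ℝ) b, c * f₁ x + d * g₁ x = 0 ∧ c * f₂ x + d * g₂ x = 0 := by
  obtain ⟨P₁, P₂, hP, hPx⟩ := exists_spansDeficiency hα hb
  exact ⟨⟨P₁, P₂, hP.mem, hPx⟩, fun _ _ _ _ hf hg => hP.exists_linear_dependence hf hg⟩

end
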